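/- Let 1 < p < ∞ and g ∈ L^p([0,1]^n). If h ∈ L^p([0,1]^n) has the same marginals as g and sign(h)|h|^{p−1}(ξ) = (1/n)Σ_{i=1}^n Φ_i(ξ_i) a.e. for some Φ_i ∈ L^q([0,1]) (q = p/(p−1)), then ‖h‖_p ≤ ‖k‖_p for every k ∈ L^p([0,1]^n) with the same marginals as g. -/

import Mathlib

open MeasureTheory
open scoped ENNReal NNReal

/-- Lebesgue measure restricted to the unit interval. -/
noncomputable def lineMeasure : Measure ℝ := volume.restrict (Set.Icc (0:ℝ) 1)

/-- The (product) Lebesgue measure on the unit hypercube `[0,1]^n`. -/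
noncomputable def cubeMeasure (n : ℕ) : Measure (Fin n → ℝ) :=
  Measure.pi fun _ => lineMeasure

/-- The `i`-th marginal of `g`: the integral of `g` over all coordinates except the `i`-th
(since `cubeMeasure n` is a product of probability measures, integrating the updated function
over the full cube agrees with integrating over `ξ_i^c`). -/
noncomputable def marginal {n : ℕ} (g : (Fin n → ℝ) → ℝ) (i : Fin n) (x : ℝ) : ℝ :=
  ∫ ξ, g (Function.update ξ i x) ∂(cubeMeasure n)

instance : IsProbabilityMeasure lineMeasure := by
  constructor
  rw [lineMeasure, Measure.restrict_apply_univ, Real.volume_Icc]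
  norm_num

instance (n : ℕ) : IsProbabilityMeasure (cubeMeasure n) := by
  rw [cubeMeasure]; infer_instance

lemma measurable_updater {n : ℕ} (i : Fin n) :
    Measurable (fun pr : (Fin n → ℝ) × ℝ => Function.update pr.1 i pr.2) := by
  rw [measurable_pi_iff]
  intro j
  by_cases hj : j = i
  · subst hj; simpa [Function.update_apply] using measurable_snd
  · simpa [Function.update_apply, hj] using measurable_fst.eval

lemma mp_update {n : ℕ} (i : Fin n) :
    MeasurePreserving (fun pr : (Fin n → ℝ) × ℝ => Function.update pr.1 i pr.2)
      ((cubeMeasure n).prod lineMeasure) (cubeMeasure n) := by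
  refine ⟨measurable_updater i, ?_⟩
  rw [cubeMeasure]
  refine (Measure.pi_eq fun s hs => ?_).symm
  rw [Measure.map_apply (measurable_updater i) (MeasurableSet.univ_pi hs)]
  have hpre : (fun pr : (Fin n → ℝ) × ℝ => Function.update pr.1 i pr.2) ⁻¹'
      (Set.univ.pi s) = (Set.univ.pi (Function.update s i Set.univ)) ×ˢ (s i) := by
    ext ⟨ξ, x⟩
    simp only [Set.mem_preimage, Set.mem_pi, Set.mem_univ, forall_true_left,
      Set.mem_prod, Function.update_apply]
    constructor
    · intro H
      refine ⟨fun j => ?_, by simpa using H i⟩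
      by_cases hj : j = i <;> simp [hj]
      · simpa [hj] using H j
    · rintro ⟨H1, H2⟩ j
      by_cases hj : j = i
      · simpa [hj] using H2
      · simpa [hj] using H1 j
  rw [hpre, Measure.prod_prod, Measure.pi_pi]
  rw [Fintype.prod_eq_mul_prod_compl i, Function.update_self]
  simp only [measure_univ, one_mul]
  rw [Fintype.prod_eq_mul_prod_compl i, mul_comm]
  congr 1
  refine Finset.prod_congr rfl fun j hj => ?_
  have : j ≠ i := by simpa using hj
  rw [Function.update_of_ne this]

lemma mp_eval {n : ℕ} (i : Fin n) :
    MeasurePreserving (fun ξ : Fin n → ℝ => ξ i) (cubeMeasure n) lineMeasure := by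
  refine ⟨measurable_pi_apply i, ?_⟩
  have h1 := (mp_update i).map_eq
  calc Measure.map (fun ξ : Fin n → ℝ => ξ i) (cubeMeasure n)
      = Measure.map (fun ξ : Fin n → ℝ => ξ i)
          (Measure.map (fun pr : (Fin n → ℝ) × ℝ => Function.update pr.1 i pr.2)
            ((cubeMeasure n).prod lineMeasure)) := by rw [h1]
    _ = Measure.map ((fun ξ : Fin n → ℝ => ξ i) ∘
          (fun pr : (Fin n → ℝ) × ℝ => Function.update pr.1 i pr.2))
          ((cubeMeasure n).prod lineMeasure) := by
        rw [Measure.map_map (measurable_pi_apply i) (measurable_updater i)]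
    _ = Measure.map Prod.snd ((cubeMeasure n).prod lineMeasure) := by
        congr 1; ext pr; simp
    _ = lineMeasure := by rw [Measure.map_snd_prod]; simp

/-- Fubini for one coordinate. -/
lemma integral_coord_mul {n : ℕ} (i : Fin n) (Φ : ℝ → ℝ) (f : (Fin n → ℝ) → ℝ)
    (hint : Integrable (fun ξ => Φ (ξ i) * f ξ) (cubeMeasure n)) :
    ∫ ξ, Φ (ξ i) * f ξ ∂(cubeMeasure n) = ∫ x, Φ x * marginal f i x ∂lineMeasure := by
  have hT := mp_update i
  have hmeas := measurable_updater (n := n) i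
  have h1 : ∫ ξ, Φ (ξ i) * f ξ ∂(cubeMeasure n)
      = ∫ pr : (Fin n → ℝ) × ℝ, Φ (pr.2) * f (Function.update pr.1 i pr.2)
          ∂((cubeMeasure n).prod lineMeasure) := by
    conv_lhs => rw [← hT.map_eq]
    rw [integral_map hmeas.aemeasurable]
    · simp only [Function.update_self]
    · rw [hT.map_eq]; exact hint.1
  have hint2 : Integrable (fun pr : (Fin n → ℝ) × ℝ =>
      Φ (pr.2) * f (Function.update pr.1 i pr.2)) ((cubeMeasure n).prod lineMeasure) := by
    have hint' : Integrable (fun ξ => Φ (ξ i) * f ξ)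
        (Measure.map (fun pr : (Fin n → ℝ) × ℝ => Function.update pr.1 i pr.2)
          ((cubeMeasure n).prod lineMeasure)) := by rw [hT.map_eq]; exact hint
    have := (integrable_map_measure hint'.1 hmeas.aemeasurable).mp hint'
    convert this using 1
    ext pr
    simp [Function.comp, Function.update_self]
  rw [h1, integral_prod_symm _ hint2]
  refine integral_congr_ae (Filter.Eventually.of_forall fun x => ?_)
  simp only []
  rw [integral_const_mul]
  rfl

lemma real_mul_sign (x : ℝ) : x * Real.sign x = |x| := by
  rcases lt_trichotomy x 0 with hx|hx|hx
  · rw [Real.sign_of_neg hx, abs_of_neg hx]; ring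
  · simp [hx]
  · rw [Real.sign_of_pos hx, abs_of_pos hx]; ring

lemma abs_sign_rpow (x : ℝ) {r : ℝ} (hr : r ≠ 0) :
    abs (Real.sign x * |x| ^ r) = |x| ^ r := by
  rcases eq_or_ne x 0 with hx|hx
  · simp [hx, Real.sign_zero, Real.zero_rpow hr]
  · rw [abs_mul, abs_of_nonneg (Real.rpow_nonneg (abs_nonneg x) r)]
    rcases Real.sign_apply_eq_of_ne_zero x hx with h|h <;> simp [h]

lemma integrable_lq_mul {n : ℕ} {p q : ℝ} (hpq : p.HolderConjugate q)
    {φ f : (Fin n → ℝ) → ℝ} (hφ : MemLp φ (ENNReal.ofReal q) (cubeMeasure n))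
    (hf : MemLp f (ENNReal.ofReal p) (cubeMeasure n)) :
    Integrable (fun ξ => φ ξ * f ξ) (cubeMeasure n) := by
  rw [← memLp_one_iff_integrable]
  have h1 : (1 : ℝ≥0∞) / 1 = 1 / ENNReal.ofReal q + 1 / ENNReal.ofReal p := by
    simp only [one_div, inv_one]
    rw [add_comm, hpq.inv_add_inv_ennreal]
  haveI : ENNReal.HolderTriple (ENNReal.ofReal q) (ENNReal.ofReal p) 1 :=
    ⟨by simpa [one_div] using h1.symm⟩
  exact MemLp.smul (𝕜 := ℝ) hf hφ

theorem stmt11 (n : ℕ) (hn : 2 ≤ n) (p q : ℝ) (hp : 1 < p) (hq : q = p / (p - 1))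
    (g h : (Fin n → ℝ) → ℝ)
    (hgL : MemLp g (ENNReal.ofReal p) (cubeMeasure n))
    (hhL : MemLp h (ENNReal.ofReal p) (cubeMeasure n))
    (hmarg : ∀ i : Fin n, marginal h i =ᵐ[lineMeasure] marginal g i)
    (Φ : Fin n → ℝ → ℝ) (hΦ : ∀ i, MemLp (Φ i) (ENNReal.ofReal q) lineMeasure)
    (hdual : (fun ξ => Real.sign (h ξ) * |h ξ| ^ (p - 1)) =ᵐ[cubeMeasure n]
      fun ξ => (1 / (n : ℝ)) * ∑ i : Fin n, Φ i (ξ i)) :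
    ∀ k : (Fin n → ℝ) → ℝ, MemLp k (ENNReal.ofReal p) (cubeMeasure n) →
      (∀ i : Fin n, marginal k i =ᵐ[lineMeasure] marginal g i) →
      eLpNorm h (ENNReal.ofReal p) (cubeMeasure n)
        ≤ eLpNorm k (ENNReal.ofReal p) (cubeMeasure n) := by
  intro k hkL hkmarg
  have hpq : p.HolderConjugate q := (Real.holderConjugate_iff_eq_conjExponent hp).2 hq
  have hp0 : (0:ℝ) < p := hpq.pos
  have hq0 : (0:ℝ) < q := hpq.symm.pos
  set μ := cubeMeasure n with hμ
  set G : (Fin n → ℝ) → ℝ := fun ξ => (1 / (n : ℝ)) * ∑ i : Fin n, Φ i (ξ i) with hG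
  set A := ∫ ξ, ‖h ξ‖ ^ p ∂μ with hA
  set B := ∫ ξ, ‖k ξ‖ ^ p ∂μ with hB
  have hΦc : ∀ i : Fin n, MemLp (fun ξ : Fin n → ℝ => Φ i (ξ i)) (ENNReal.ofReal q) μ :=
    fun i => (hΦ i).comp_measurePreserving (mp_eval i)
  have hGq : MemLp G (ENNReal.ofReal q) μ := by
    rw [hG]
    exact MemLp.const_mul (memLp_finset_sum (f := fun i (ξ : Fin n → ℝ) => Φ i (ξ i)) Finset.univ fun i _ => hΦc i) (1 / (n : ℝ))
  -- expansion of ∫ G * f via marginals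
  have expand : ∀ f : (Fin n → ℝ) → ℝ, MemLp f (ENNReal.ofReal p) μ →
      ∫ ξ, G ξ * f ξ ∂μ
        = (1 / (n:ℝ)) * ∑ i : Fin n, ∫ x, Φ i x * marginal f i x ∂lineMeasure := by
    intro f hf
    have hterm : ∀ i : Fin n, Integrable (fun ξ => Φ i (ξ i) * f ξ) μ :=
      fun i => integrable_lq_mul hpq (hΦc i) hf
    calc ∫ ξ, G ξ * f ξ ∂μ
        = ∫ ξ, (1/(n:ℝ)) * ∑ i : Fin n, Φ i (ξ i) * f ξ ∂μ := by
          refine integral_congr_ae (Filter.Eventually.of_forall fun ξ => ?_)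
          simp only [hG]
          rw [mul_assoc, Finset.sum_mul]
      _ = (1/(n:ℝ)) * ∫ ξ, ∑ i : Fin n, Φ i (ξ i) * f ξ ∂μ := by
          rw [integral_const_mul]
      _ = (1/(n:ℝ)) * ∑ i : Fin n, ∫ ξ, Φ i (ξ i) * f ξ ∂μ := by
          rw [integral_finset_sum _ fun i _ => hterm i]
      _ = (1/(n:ℝ)) * ∑ i : Fin n, ∫ x, Φ i x * marginal f i x ∂lineMeasure := by
          congr 1
          exact Finset.sum_congr rfl fun i _ => integral_coord_mul i (Φ i) f (hterm i)
  have eq_hk : ∫ ξ, G ξ * h ξ ∂μ = ∫ ξ, G ξ * k ξ ∂μ := by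
    rw [expand h hhL, expand k hkL]
    congr 1
    refine Finset.sum_congr rfl fun i _ => ?_
    refine integral_congr_ae ?_
    have hhk : marginal h i =ᵐ[lineMeasure] marginal k i := (hmarg i).trans (hkmarg i).symm
    filter_upwards [hhk] with x hx
    rw [hx]
  have eqA : ∫ ξ, G ξ * h ξ ∂μ = A := by
    have e1 : (fun ξ => G ξ * h ξ) =ᵐ[μ]
        fun ξ => (Real.sign (h ξ) * |h ξ| ^ (p-1)) * h ξ := by
      filter_upwards [hdual] with ξ hξ
      rw [← hξ]
    rw [integral_congr_ae e1, hA]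
    refine integral_congr_ae (Filter.Eventually.of_forall fun ξ => ?_)
    have hpne : p - 1 + 1 ≠ 0 := by rw [sub_add_cancel]; exact hp0.ne'
    calc Real.sign (h ξ) * |h ξ| ^ (p-1) * h ξ
        = |h ξ| ^ (p-1) * (h ξ * Real.sign (h ξ)) := by ring
      _ = |h ξ| ^ (p-1) * |h ξ| ^ (1:ℝ) := by rw [real_mul_sign, Real.rpow_one]
      _ = |h ξ| ^ (p - 1 + 1) := (Real.rpow_add' (abs_nonneg _) hpne).symm
      _ = ‖h ξ‖ ^ p := by rw [sub_add_cancel, Real.norm_eq_abs]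
  have eqGq : ∫ ξ, ‖G ξ‖ ^ q ∂μ = A := by
    rw [hA]
    refine integral_congr_ae ?_
    filter_upwards [hdual] with ξ hξ
    rw [Real.norm_eq_abs, ← hξ,
      abs_sign_rpow (h ξ) (sub_ne_zero.2 hp.ne'),
      ← Real.rpow_mul (abs_nonneg _), hpq.sub_one_mul_conj, Real.norm_eq_abs]
  have ineqB : ∫ ξ, G ξ * k ξ ∂μ ≤ B ^ (1/p) * A ^ (1/q) := by
    have h2 := integral_mul_norm_le_Lp_mul_Lq hpq hkL hGq
    rw [eqGq] at h2
    calc ∫ ξ, G ξ * k ξ ∂μ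
        ≤ |∫ ξ, G ξ * k ξ ∂μ| := le_abs_self _
      _ ≤ ∫ ξ, ‖G ξ * k ξ‖ ∂μ := by
          simpa [Real.norm_eq_abs] using
            norm_integral_le_integral_norm (μ := μ) (fun ξ => G ξ * k ξ)
      _ = ∫ ξ, ‖k ξ‖ * ‖G ξ‖ ∂μ := by
          refine integral_congr_ae (Filter.Eventually.of_forall fun ξ => ?_)
          simp [Real.norm_eq_abs, abs_mul, mul_comm]
      _ ≤ B ^ (1/p) * A ^ (1/q) := h2
  have main : A ≤ B ^ (1/p) * A ^ (1/q) := by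
    calc A = ∫ ξ, G ξ * h ξ ∂μ := eqA.symm
      _ = ∫ ξ, G ξ * k ξ ∂μ := eq_hk
      _ ≤ B ^ (1/p) * A ^ (1/q) := ineqB
  have hA0 : 0 ≤ A := integral_nonneg fun ξ => Real.rpow_nonneg (norm_nonneg _) _
  have hB0 : 0 ≤ B := integral_nonneg fun ξ => Real.rpow_nonneg (norm_nonneg _) _
  have key : A ^ (1/p) ≤ B ^ (1/p) := by
    rcases eq_or_lt_of_le hA0 with hA'|hA'
    · rw [← hA', Real.zero_rpow (by positivity : (1:ℝ)/p ≠ 0)]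
      exact Real.rpow_nonneg hB0 _
    · have hAq : 0 < A ^ (1/q) := Real.rpow_pos_of_pos hA' _
      have hstep : A ^ (1/p) * A ^ (1/q) ≤ B ^ (1/p) * A ^ (1/q) := by
        calc A ^ (1/p) * A ^ (1/q) = A := by
              rw [← Real.rpow_add hA']
              rw [show 1/p + 1/q = 1 by
                simpa [one_div] using hpq.inv_add_inv_eq_one]
              exact Real.rpow_one A
          _ ≤ B ^ (1/p) * A ^ (1/q) := main
      exact le_of_mul_le_mul_right hstep hAq
  have hne0 : ENNReal.ofReal p ≠ 0 := by
    simp [ENNReal.ofReal_eq_zero, not_le, hp0]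
  have hnetop : ENNReal.ofReal p ≠ ⊤ := ENNReal.ofReal_ne_top
  rw [hhL.eLpNorm_eq_integral_rpow_norm hne0 hnetop,
    hkL.eLpNorm_eq_integral_rpow_norm hne0 hnetop]
  apply ENNReal.ofReal_le_ofReal
  simp only [ENNReal.toReal_ofReal hp0.le]
  simpa [one_div, hA, hB, Real.norm_eq_abs] using key
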